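/- In the permutation manipulation game under the feasibility assumption, a matching is induced by some super-strong Nash equilibrium strategy profile of the manipulators if and only if it is Pareto-optimal among feasible matchings. -/

import Mathlib

open List

/-- A stable-matching instance: each agent has a strict preference order
(a duplicate-free list, earlier = more preferred) over a subset of the other side. -/
structure SMInstance (M W : Type*) where
  mpref : M → List W
  wpref : W → List M
  mnodup : ∀ m, (mpref m).Nodup
  wnodup : ∀ w, (wpref w).Nodup

/-- A matching: a pairing of men and women (agents may be unmatched),
involutive on matched pairs. -/
structure Matching (M W : Type*) where
  μm : M → Option W
  μw : W → Option M
  consistent : ∀ m w, μm m = some w ↔ μw w = some m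

section Defs

variable {M W : Type*} [DecidableEq M] [DecidableEq W]

/-- Man `m` strictly prefers woman `w` to the (possibly empty) assignment `o`. -/
def SMInstance.mPref (I : SMInstance M W) (m : M) (w : W) : Option W → Prop
  | some w' => w ∈ I.mpref m ∧ (w' ∉ I.mpref m ∨ (I.mpref m).idxOf w < (I.mpref m).idxOf w')
  | none => w ∈ I.mpref m

/-- Woman `w` strictly prefers man `m` to the (possibly empty) assignment `o`. -/
def SMInstance.wPref (I : SMInstance M W) (w : W) (m : M) : Option M → Prop
  | some m' => m ∈ I.wpref w ∧ (m' ∉ I.wpref w ∨ (I.wpref w).idxOf m < (I.wpref w).idxOf m')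
  | none => m ∈ I.wpref w

/-- Man `m` weakly prefers assignment `o₁` to assignment `o₂`. -/
def SMInstance.mWeak (I : SMInstance M W) (m : M) (o₁ o₂ : Option W) : Prop :=
  o₁ = o₂ ∨ ∃ w, o₁ = some w ∧ I.mPref m w o₂

/-- Woman `w` weakly prefers assignment `o₁` to assignment `o₂`. -/
def SMInstance.wWeak (I : SMInstance M W) (w : W) (o₁ o₂ : Option M) : Prop :=
  o₁ = o₂ ∨ ∃ m, o₁ = some m ∧ I.wPref w m o₂

def IndivRational (I : SMInstance M W) (μ : Matching M W) : Prop :=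
  ∀ m w, μ.μm m = some w → w ∈ I.mpref m ∧ m ∈ I.wpref w

def BlockingPair (I : SMInstance M W) (μ : Matching M W) (m : M) (w : W) : Prop :=
  μ.μm m ≠ some w ∧ I.mPref m w (μ.μm m) ∧ I.wPref w m (μ.μw w)

def IsStable (I : SMInstance M W) (μ : Matching M W) : Prop :=
  IndivRational I μ ∧ ∀ m w, ¬ BlockingPair I μ m w

/-- The men-optimal stable matching (= output of men-proposing Gale–Shapley). -/
def IsMenOptimal (I : SMInstance M W) (μ : Matching M W) : Prop :=
  IsStable I μ ∧ ∀ μ', IsStable I μ' → ∀ m, I.mWeak m (μ.μm m) (μ'.μm m)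

/-- The women-optimal stable matching. -/
def IsWomenOptimal (I : SMInstance M W) (μ : Matching M W) : Prop :=
  IsStable I μ ∧ ∀ μ', IsStable I μ' → ∀ w, I.wWeak w (μ.μw w) (μ'.μw w)

/-- `I'` arises from `I` by arbitrary misreports of the women in `L`
(all men and all women outside `L` are truthful). -/
def GeneralManip (I I' : SMInstance M W) (L : Set W) : Prop :=
  I'.mpref = I.mpref ∧ ∀ w ∉ L, I'.wpref w = I.wpref w

/-- `I'` arises from `I` by truncation (prefix) misreports of the women in `L`. -/
def TruncManip (I I' : SMInstance M W) (L : Set W) : Prop :=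
  GeneralManip I I' L ∧ ∀ w ∈ L, (I'.wpref w) <+: (I.wpref w)

/-- `I'` arises from `I` by permutation misreports of the women in `L`. -/
def PermManip (I I' : SMInstance M W) (L : Set W) : Prop :=
  GeneralManip I I' L ∧ ∀ w ∈ L, (I'.wpref w).Perm (I.wpref w)

/-- Woman `w` is strictly better off in `μ₁` than in `μ₂` (true preferences). -/
def wStrictBetter (I : SMInstance M W) (w : W) (μ₁ μ₂ : Matching M W) : Prop :=
  ∃ m, μ₁.μw w = some m ∧ I.wPref w m (μ₂.μw w)

/-- The set `δ(w)` of suitors of `w` at matching `μ`: the men who prefer `w`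
to their own partner in `μ`. -/
def suitorSet (I : SMInstance M W) (μ : Matching M W) (w : W) : Set M :=
  {m | I.mPref m w (μ.μm m)}

/-- The suitor graph of Kobayashi–Matsui, on vertices `M ⊕ W ⊕ {s}`. -/
inductive SuitorEdge (I : SMInstance M W) (L : Set W) (μ : Matching M W) :
    M ⊕ W ⊕ Unit → M ⊕ W ⊕ Unit → Prop
  | partner_wm (w : W) (m : M) : μ.μw w = some m →
      SuitorEdge I L μ (Sum.inr (Sum.inl w)) (Sum.inl m)
  | partner_mw (w : W) (m : M) : μ.μw w = some m →
      SuitorEdge I L μ (Sum.inl m) (Sum.inr (Sum.inl w))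
  | suitor_manip (w : W) (m : M) : w ∈ L → m ∈ suitorSet I μ w →
      SuitorEdge I L μ (Sum.inl m) (Sum.inr (Sum.inl w))
  | suitor_honest (w : W) (m : M) : w ∉ L → m ∈ suitorSet I μ w →
      (∀ m' ∈ suitorSet I μ w, m' ≠ m → (I.wpref w).idxOf m < (I.wpref w).idxOf m') →
      SuitorEdge I L μ (Sum.inl m) (Sum.inr (Sum.inl w))
  | fromSource (w : W) : suitorSet I μ w = ∅ →
      SuitorEdge I L μ (Sum.inr (Sum.inr ())) (Sum.inr (Sum.inl w))

/-- Reachability in the suitor graph. -/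
abbrev SReach (I : SMInstance M W) (L : Set W) (μ : Matching M W) :
    (M ⊕ W ⊕ Unit) → (M ⊕ W ⊕ Unit) → Prop :=
  Relation.ReflTransGen (SuitorEdge I L μ)

/-- A reduced table (shortlists) for instance `I`: sublists of the true lists,
with mutual membership, where each man is engaged to the head of his reduced list,
each woman to the last man of hers, and every removed man is worse for the woman
than her current partner. -/
structure ReducedTable (I : SMInstance M W) where
  rm : M → List W
  rw : W → List M
  rmSub : ∀ m, (rm m).Sublist (I.mpref m)
  rwSub : ∀ w, (rw w).Sublist (I.wpref w)
  mem_iff : ∀ m w, w ∈ rm m ↔ m ∈ rw w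
  engaged : ∀ m w, (rm m).head? = some w ↔ (rw w).getLast? = some m
  removed_worse : ∀ m w p, m ∈ I.wpref w → m ∉ rw w → (rw w).getLast? = some p →
      (I.wpref w).idxOf p < (I.wpref w).idxOf m

/-- A rotation: a cyclic sequence of (distinct) men `m₀,…,m_{r-1}`
together with their current partners `w₀,…,w_{r-1}`. -/
structure Rot (M W : Type*) where
  r : ℕ
  hr : 2 ≤ r
  ms : Fin r → M
  ws : Fin r → W
  inj : Function.Injective ms

/-- Cyclic successor of an index of a rotation. -/
def Rot.nxt (R : Rot M W) (i : Fin R.r) : Fin R.r :=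
  ⟨((i : ℕ) + 1) % R.r, Nat.mod_lt _ (by have := R.hr; omega)⟩

/-- The reduced list of woman `w` determined by the stable matching `μ`:
the men weakly preferred to her current partner. -/
def reducedListW (I : SMInstance M W) (μ : Matching M W) (w : W) : List M :=
  match μ.μw w with
  | some p => (I.wpref w).filter (fun m => decide ((I.wpref w).idxOf m ≤ (I.wpref w).idxOf p))
  | none => []

/-- The reduced list of man `m` determined by the stable matching `μ`. -/
def reducedListM (I : SMInstance M W) (μ : Matching M W) (m : M) : List W :=
  (I.mpref m).filter (fun w => decide (m ∈ reducedListW I μ w))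

/-- The rotation `R` is exposed in (the reduced table of) the matching `μ`:
`w_i` is first and `w_{i+1}` second on `m_i`'s reduced list. -/
def Exposed (I : SMInstance M W) (μ : Matching M W) (R : Rot M W) : Prop :=
  ∀ i, (reducedListM I μ (R.ms i)).head? = some (R.ws i) ∧
       (reducedListM I μ (R.ms i))[1]? = some (R.ws (R.nxt i))

/-- `μ'` is the matching obtained from `μ` by eliminating the rotation `R`:
each `m_i` is now matched with `w_{i+1}`, everyone else is unchanged. -/
def ElimStep (R : Rot M W) (μ μ' : Matching M W) : Prop :=
  (∀ i, μ'.μm (R.ms i) = some (R.ws (R.nxt i))) ∧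
  ∀ m, (∀ i, m ≠ R.ms i) → μ'.μm m = μ.μm m

/-- `ElimSeq I μ S μ'`: the matching `μ'` is obtained from `μ` by successively
eliminating the (exposed-at-the-time) rotations of the set `S`. -/
inductive ElimSeq (I : SMInstance M W) : Matching M W → Set (Rot M W) → Matching M W → Prop
  | refl (μ : Matching M W) : ElimSeq I μ ∅ μ
  | step {μ μ' μ'' : Matching M W} {R : Rot M W} {S : Set (Rot M W)} :
      Exposed I μ R → ElimStep R μ μ' → ElimSeq I μ' S μ'' → ElimSeq I μ (insert R S) μ''

/-- The rotation `R` moves man `m` from woman `w` to woman `w'`. -/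
def Moves (R : Rot M W) (m : M) (w w' : W) : Prop :=
  ∃ i, R.ms i = m ∧ R.ws i = w ∧ R.ws (R.nxt i) = w'

/-- `R₁` explicitly precedes `R₂`: they share a man `m` such that `R₁` moves `m`
to some woman `w` and `R₂` moves `m` away from `w`. -/
def ExplicitPrec (R₁ R₂ : Rot M W) : Prop :=
  ∃ m w w₁ w₂, Moves R₁ m w₁ w ∧ Moves R₂ m w w₂

/-- The precedence relation `≺`: transitive closure of explicit precedence. -/
def Prec (R₁ R₂ : Rot M W) : Prop :=
  Relation.TransGen ExplicitPrec R₁ R₂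

/-- `R` is a rotation of the instance `I`: it is exposed at some matching
obtained from the men-optimal matching by eliminating rotations. -/
def IsRotOf (I : SMInstance M W) (R : Rot M W) : Prop :=
  ∃ μ0 S μ', IsMenOptimal I μ0 ∧ ElimSeq I μ0 S μ' ∧ Exposed I μ' R

/-- A closed (downward-closed under `≺`) set of rotations of the instance `I`. -/
def IsClosedSet (I : SMInstance M W) (𝓡 : Set (Rot M W)) : Prop :=
  (∀ R ∈ 𝓡, IsRotOf I R) ∧ ∀ R ∈ 𝓡, ∀ R', IsRotOf I R' → Prec R' R → R' ∈ 𝓡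

/-- The closed set `𝓡` can be eliminated: the matching obtained by eliminating it
is stable w.r.t. the true profile and is the men-optimal stable matching of some
profile in which only the women of `L` misreport. -/
def CanEliminate (I : SMInstance M W) (L : Set W) (𝓡 : Set (Rot M W)) : Prop :=
  ∃ μ0 μ', IsMenOptimal I μ0 ∧ ElimSeq I μ0 𝓡 μ' ∧ IsStable I μ' ∧
    ∃ I', GeneralManip I I' L ∧ IsMenOptimal I' μ'

/-- `R` is a maximal rotation of the set `𝓡`. -/
def MaxRot (𝓡 : Set (Rot M W)) (R : Rot M W) : Prop :=
  R ∈ 𝓡 ∧ ∀ R' ∈ 𝓡, ¬ Prec R R'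

/-- Whether man `m` proposes to woman `w` in the men-proposing Gale–Shapley run
whose outcome is `μ` (he proposes to every woman he weakly prefers to his final partner). -/
def proposedToB (I : SMInstance M W) (μ : Matching M W) (m : M) (w : W) : Bool :=
  decide (w ∈ I.mpref m) &&
    (match μ.μm m with
     | none => true
     | some w' => decide ((I.mpref m).idxOf w ≤ (I.mpref m).idxOf w'))

/-- The proposal list `Pro(w)`: all men who proposed to `w`, ordered as in her stated list. -/
def proposals (I : SMInstance M W) (μ : Matching M W) (w : W) : List M :=
  (I.wpref w).filter (fun m => proposedToB I μ m w)

/-- `μ` is feasible for the permutation-manipulation game of coalition `L`. -/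
def FeasibleM (I : SMInstance M W) (L : Set W) (μ : Matching M W) : Prop :=
  IsStable I μ ∧ ∃ I', PermManip I I' L ∧ IsMenOptimal I' μ

/-- `μ` is Pareto-optimal among feasible matchings (for the women). -/
def ParetoOptimal (I : SMInstance M W) (L : Set W) (μ : Matching M W) : Prop :=
  FeasibleM I L μ ∧ ¬∃ μ', FeasibleM I L μ' ∧
    (∀ w, I.wWeak w (μ'.μw w) (μ.μw w)) ∧ (∃ w, wStrictBetter I w μ' μ)

/-- The reported profile `I'` with induced matching `μ` is a super-strong Nash
equilibrium of the permutation-manipulation game under the feasibility assumption. -/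
def SuperStrongNE (I : SMInstance M W) (L : Set W) (I' : SMInstance M W)
    (μ : Matching M W) : Prop :=
  PermManip I I' L ∧ IsMenOptimal I' μ ∧ IsStable I μ ∧
  ∀ (Ls : Set W), Ls ⊆ L → ∀ I'' μ'',
    PermManip I I'' L → (∀ w ∉ Ls, I''.wpref w = I'.wpref w) →
    IsMenOptimal I'' μ'' → IsStable I μ'' →
    ¬((∀ l ∈ Ls, I.wWeak l (μ''.μw l) (μ.μw l)) ∧ ∃ l ∈ Ls, wStrictBetter I l μ'' μ)

end Defs

/-!
If `μ` is stable for the true preferences, every man weakly prefers `μ` to any matching `ν`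
that every woman weakly prefers to `μ`. If moreover `ν` agrees with `μ` on the manipulators, then
`μ` is stable for the report inducing `ν`, and men-optimality forces `ν = μ`; so a super-strong
equilibrium admits no Pareto improvement, since the whole coalition `L` could deviate to it.
Conversely, if a coalition's deviation to `ν` weakly helps each of its members, the men-join of
`μ` and `ν` (every man takes the better of his two partners) is stable for the original
report, so men-optimality of `μ` leaves no man better off in `ν`; by the decomposition lemma no
woman is worse off either, and `ν` would Pareto-dominate `μ`.
-/

section ListPref

variable {α : Type*} [DecidableEq α] {l : List α} {a b : α} {o o₁ o₂ o₃ : Option α}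

/-- `SMInstance.mPref I m` and `SMInstance.wPref I w` are definitionally `ListPref` of the
agent's list, and `mWeak`, `wWeak` are `ListWeak`, so the order lemmas below serve both sides. -/
def ListPref (l : List α) (a : α) : Option α → Prop
  | some b => a ∈ l ∧ (b ∉ l ∨ l.idxOf a < l.idxOf b)
  | none => a ∈ l

def ListWeak (l : List α) (o₁ o₂ : Option α) : Prop :=
  o₁ = o₂ ∨ ∃ a, o₁ = some a ∧ ListPref l a o₂

theorem ListPref.irrefl : ¬ ListPref l a (some a) :=
  fun ⟨ha, h⟩ => h.elim (· ha) (lt_irrefl _)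

theorem ListPref.ne (h : ListPref l a o) : o ≠ some a := by
  rintro rfl
  exact ListPref.irrefl h

theorem ListPref.asymm (h₁ : ListPref l a (some b)) (h₂ : ListPref l b (some a)) : False := by
  obtain ⟨ha, h₁ | h₁⟩ := h₁ <;> obtain ⟨hb, h₂ | h₂⟩ := h₂
  all_goals first | contradiction | omega

theorem ListPref.trans (h₁ : ListPref l a (some b)) (h₂ : ListPref l b o) : ListPref l a o := by
  obtain ⟨ha, h₁⟩ := h₁
  cases o with
  | none => exact ha
  | some c =>
    obtain ⟨hb, h₂⟩ := h₂
    have hab := h₁.resolve_left (not_not.2 hb)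
    exact ⟨ha, h₂.imp_right (hab.trans ·)⟩

theorem ListPref.trans_listWeak (h₁ : ListPref l a o₁) (h₂ : ListWeak l o₁ o₂) :
    ListPref l a o₂ := by
  rcases h₂ with rfl | ⟨b, rfl, hb⟩
  exacts [h₁, h₁.trans hb]

theorem ListWeak.trans (h₁ : ListWeak l o₁ o₂) (h₂ : ListWeak l o₂ o₃) : ListWeak l o₁ o₃ := by
  rcases h₁ with rfl | ⟨a, rfl, ha⟩
  exacts [h₂, Or.inr ⟨a, rfl, ha.trans_listWeak h₂⟩]

theorem ListWeak.antisymm (h₁ : ListWeak l o₁ o₂) (h₂ : ListWeak l o₂ o₁) : o₁ = o₂ := by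
  rcases h₁ with h₁ | ⟨a, rfl, ha⟩
  · exact h₁
  rcases h₂ with h₂ | ⟨b, rfl, hb⟩
  exacts [h₂.symm, (ha.asymm hb).elim]

theorem listWeak_iff_not_listPref (hl : ∀ a, a ∈ l) :
    ListWeak l o₁ o₂ ↔ ¬ ∃ a, o₂ = some a ∧ ListPref l a o₁ := by
  refine ⟨?_, fun h => ?_⟩
  · rintro (rfl | ⟨b, rfl, hb⟩) ⟨a, rfl, ha⟩
    exacts [ListPref.irrefl ha, ha.asymm hb]
  cases o₂ with
  | none =>
    cases o₁ with
    | none => exact Or.inl rfl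
    | some b => exact Or.inr ⟨b, rfl, hl b⟩
  | some c =>
    cases o₁ with
    | none => exact (h ⟨c, rfl, hl c⟩).elim
    | some b =>
      by_cases hbc : b = c
      · exact Or.inl (congrArg some hbc)
      have hcb : ¬ l.idxOf c < l.idxOf b := fun hlt => h ⟨c, rfl, hl c, Or.inr hlt⟩
      have hne : l.idxOf b ≠ l.idxOf c := fun he => hbc ((List.idxOf_inj (hl b)).1 he)
      exact Or.inr ⟨b, rfl, hl b, Or.inr (by omega)⟩

theorem listWeak_some_iff_not_listPref (hl : ∀ a, a ∈ l) :
    ListWeak l o (some a) ↔ ¬ ListPref l a o := by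
  simp [listWeak_iff_not_listPref hl]

end ListPref

namespace Matching

variable {M W : Type*} (μ : Matching M W)

theorem μm_injective {m m' : M} {w : W} (h : μ.μm m = some w) (h' : μ.μm m' = some w) :
    m = m' :=
  Option.some_injective _ (((μ.consistent m w).1 h).symm.trans ((μ.consistent m' w).1 h'))

theorem μw_injective {w w' : W} {m : M} (h : μ.μw w = some m) (h' : μ.μw w' = some m) :
    w = w' :=
  Option.some_injective _ (((μ.consistent m w).2 h).symm.trans ((μ.consistent m w').2 h'))

theorem μw_eq_of_μm_eq {ν : Matching M W} (h : ∀ m, μ.μm m = ν.μm m) (w : W) :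
    μ.μw w = ν.μw w :=
  Option.ext fun m => by rw [← μ.consistent, ← ν.consistent, h]

noncomputable def piecewise (ν : Matching M W) (A : Set M) (B : Set W)
    (hν : ∀ m w, ν.μm m = some w → (m ∈ A ↔ w ∈ B))
    (hμ : ∀ m w, μ.μm m = some w → (m ∈ A ↔ w ∈ B)) : Matching M W := by
  classical
  exact
  { μm := fun m => if m ∈ A then ν.μm m else μ.μm m
    μw := fun w => if w ∈ B then ν.μw w else μ.μw w
    consistent := fun m w => by
      by_cases hm : m ∈ A <;> by_cases hw : w ∈ B <;> simp only [hm, hw, if_true, if_false]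
      · exact ν.consistent m w
      · exact iff_of_false (fun h => hw ((hν m w h).1 hm))
          (fun h => hw ((hμ m w ((μ.consistent m w).2 h)).1 hm))
      · exact iff_of_false (fun h => hm ((hμ m w h).2 hw))
          (fun h => hm ((hν m w ((ν.consistent m w).2 h)).2 hw))
      · exact μ.consistent m w }

end Matching

section

variable {M W : Type*}

def SMInstance.IsComplete (I : SMInstance M W) : Prop :=
  ∀ m w, w ∈ I.mpref m ∧ m ∈ I.wpref w

theorem SMInstance.mPref_congr [DecidableEq W] {I J : SMInstance M W} (h : I.mpref = J.mpref) :
    I.mPref = J.mPref := by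
  cases I; cases J; subst h; rfl

theorem SMInstance.mWeak_congr [DecidableEq W] {I J : SMInstance M W} (h : I.mpref = J.mpref) :
    I.mWeak = J.mWeak := by
  cases I; cases J; subst h; rfl

theorem SMInstance.wPref_congr [DecidableEq M] {I J : SMInstance M W} {w : W}
    (h : I.wpref w = J.wpref w) : I.wPref w = J.wPref w := by
  unfold SMInstance.wPref; rw [h]

theorem PermManip.isComplete {I I' : SMInstance M W} {L : Set W} (hP : PermManip I I' L)
    (hc : I.IsComplete) : I'.IsComplete := by
  intro m w
  refine ⟨hP.1.1 ▸ (hc m w).1, ?_⟩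
  by_cases hw : w ∈ L
  · exact (hP.2 w hw).mem_iff.2 (hc m w).2
  · exact hP.1.2 w hw ▸ (hc m w).2

def mStrictBetter [DecidableEq W] (I : SMInstance M W) (m : M) (μ₁ μ₂ : Matching M W) : Prop :=
  ∃ w, μ₁.μm m = some w ∧ I.mPref m w (μ₂.μm m)

theorem mWeak_iff_not_mStrictBetter [DecidableEq W] {I : SMInstance M W} {μ ν : Matching M W}
    {m : M} (hc : I.IsComplete) : I.mWeak m (μ.μm m) (ν.μm m) ↔ ¬ mStrictBetter I m ν μ :=
  listWeak_iff_not_listPref fun w => (hc m w).1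

theorem wWeak_iff_not_wStrictBetter [DecidableEq M] {I : SMInstance M W} {μ ν : Matching M W}
    {w : W} (hc : I.IsComplete) : I.wWeak w (ν.μw w) (μ.μw w) ↔ ¬ wStrictBetter I w μ ν :=
  listWeak_iff_not_listPref fun m => (hc m w).2

section Stability

variable [DecidableEq M] [DecidableEq W] {I : SMInstance M W} {μ ν : Matching M W}
  {m : M} {w : W}

theorem IsStable.not_wPref (hμ : IsStable I μ) (h : I.mPref m w (μ.μm m)) :
    ¬ I.wPref w m (μ.μw w) :=
  fun h' => hμ.2 m w ⟨ListPref.ne h, h, h'⟩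

/-- A blocking pair `(m, w)` of `ρ` for `J` would block the witness `σ` of `w` for `K`. -/
theorem isStable_of_forall_woman {J : SMInstance M W} {ρ : Matching M W} (hJ : J.IsComplete)
    (h : ∀ w, ∃ (K : SMInstance M W) (σ : Matching M W), IsStable K σ ∧ K.mpref = J.mpref ∧
      K.wpref w = J.wpref w ∧ σ.μw w = ρ.μw w ∧ ∀ m, J.mWeak m (ρ.μm m) (σ.μm m)) :
    IsStable J ρ := by
  refine ⟨fun m w _ => hJ m w, fun m w ⟨_, hm, hw⟩ => ?_⟩
  obtain ⟨K, σ, hσ, hKm, hKw, hσw, hρσ⟩ := h w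
  refine hσ.not_wPref (m := m) (w := w) ?_ ?_
  · rw [SMInstance.mPref_congr hKm]
    exact ListPref.trans_listWeak hm (hρσ m)
  · rw [SMInstance.wPref_congr hKw, hσw]
    exact hw

theorem wStrictBetter_of_mPref (hc : I.IsComplete) (hμ : IsStable I μ)
    (hw : ν.μm m = some w) (hm : I.mPref m w (μ.μm m)) : wStrictBetter I w μ ν := by
  have hweak := (listWeak_some_iff_not_listPref fun m => (hc m w).2).2 (hμ.not_wPref hm)
  rcases hweak with hμw | ⟨p, hp, hpm⟩
  · exact (ListPref.ne hm ((μ.consistent m w).2 hμw)).elim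
  · exact ⟨p, hp, by rwa [(ν.consistent m w).1 hw]⟩

theorem mStrictBetter_of_wPref (hc : I.IsComplete) (hν : IsStable I ν)
    (hm : μ.μw w = some m) (hw : I.wPref w m (ν.μw w)) : mStrictBetter I m ν μ := by
  by_contra hnot
  have hweak := (mWeak_iff_not_mStrictBetter hc).2 hnot
  rw [(μ.consistent m w).2 hm] at hweak
  rcases hweak with hνm | ⟨_, ⟨⟩, hpref⟩
  · rw [(ν.consistent m w).1 hνm.symm] at hw
    exact ListPref.irrefl hw
  · exact hν.not_wPref hpref hw

end Stability

section Lattice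

variable [DecidableEq M] [DecidableEq W] [Finite M] [Finite W] {I : SMInstance M W}
  {μ ν : Matching M W}

/-- `ν` sends the men better off in `ν` injectively to women worse off in `ν`, and `μ` sends
those women injectively back; by finiteness both maps are onto. -/
theorem mStrictBetter_iff_wStrictBetter (hc : I.IsComplete) (hμ : IsStable I μ)
    (hν : IsStable I ν) :
    (∀ m w, ν.μm m = some w → (mStrictBetter I m ν μ ↔ wStrictBetter I w μ ν)) ∧
    (∀ m w, μ.μm m = some w → (mStrictBetter I m ν μ ↔ wStrictBetter I w μ ν)) := by
  let f : {m // mStrictBetter I m ν μ} → {w // wStrictBetter I w μ ν} := fun m =>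
    ⟨m.2.choose, wStrictBetter_of_mPref hc hμ m.2.choose_spec.1 m.2.choose_spec.2⟩
  let g : {w // wStrictBetter I w μ ν} → {m // mStrictBetter I m ν μ} := fun w =>
    ⟨w.2.choose, mStrictBetter_of_wPref hc hν w.2.choose_spec.1 w.2.choose_spec.2⟩
  have hf_spec (x) : ν.μm x.1 = some (f x).1 := x.2.choose_spec.1
  have hg_spec (y) : μ.μw y.1 = some (g y).1 := y.2.choose_spec.1
  have hf : Function.Injective f := fun x y hxy =>
    Subtype.ext (ν.μm_injective (hf_spec x) (hxy ▸ hf_spec y))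
  have hg : Function.Injective g := fun x y hxy =>
    Subtype.ext (μ.μw_injective (hg_spec x) (hxy ▸ hg_spec y))
  have hf_onto := (Finite.surjective_of_injective (hf.comp hg)).of_comp
  have hg_onto := (Finite.surjective_of_injective (hg.comp hf)).of_comp
  refine ⟨fun m w hmw => ⟨fun ⟨v, hv, hpref⟩ => ?_, fun hw => ?_⟩,
    fun m w hmw => ⟨fun hm => ?_, fun ⟨p, hp, hpref⟩ => ?_⟩⟩
  · obtain rfl := Option.some_injective _ (hv.symm.trans hmw)
    exact wStrictBetter_of_mPref hc hμ hv hpref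
  · obtain ⟨x, hx⟩ := hf_onto ⟨w, hw⟩
    obtain rfl : x.1 = m := ν.μm_injective (by rw [hf_spec, hx]) hmw
    exact x.2
  · obtain ⟨y, hy⟩ := hg_onto ⟨m, hm⟩
    obtain rfl : y.1 = w := μ.μw_injective (by rw [hg_spec, hy]) ((μ.consistent m w).1 hmw)
    exact y.2
  · obtain rfl := Option.some_injective _ (hp.symm.trans ((μ.consistent m w).1 hmw))
    exact mStrictBetter_of_wPref hc hν hp hpref

theorem exists_menJoin (hc : I.IsComplete) (hμ : IsStable I μ) (hν : IsStable I ν) :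
    ∃ ρ : Matching M W, (∀ m, I.mWeak m (ρ.μm m) (μ.μm m) ∧ I.mWeak m (ρ.μm m) (ν.μm m)) ∧
      ∀ w, ρ.μw w = μ.μw w ∨ (wStrictBetter I w μ ν ∧ ρ.μw w = ν.μw w) := by
  classical
  obtain ⟨hν_pairs, hμ_pairs⟩ := mStrictBetter_iff_wStrictBetter hc hμ hν
  refine ⟨μ.piecewise ν {m | mStrictBetter I m ν μ} {w | wStrictBetter I w μ ν}
    hν_pairs hμ_pairs, fun m => ?_, fun w => ?_⟩
  · by_cases hm : mStrictBetter I m ν μ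
    · simp only [Matching.piecewise, Set.mem_ofPred_eq, hm, if_true]
      exact ⟨Or.inr hm, Or.inl rfl⟩
    · simp only [Matching.piecewise, Set.mem_ofPred_eq, hm, if_false]
      exact ⟨Or.inl rfl, (mWeak_iff_not_mStrictBetter hc).2 hm⟩
  · by_cases hw : wStrictBetter I w μ ν <;> simp [Matching.piecewise, hw]

end Lattice

section Manipulation

variable [DecidableEq M] [DecidableEq W] {I : SMInstance M W} {μ ν : Matching M W}

/-- The men-join of `μ` and `ν` is stable for `I'`, so men-optimality of `μ` for `I'` leaves
no man better off in `ν`, hence no woman worse off. -/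
theorem wWeak_of_forall_mem_wWeak [Finite M] [Finite W] {I' I'' : SMInstance M W} {Ls : Set W}
    (hc : I.IsComplete) (hc' : I'.IsComplete) (hm' : I'.mpref = I.mpref)
    (hm'' : I''.mpref = I.mpref) (hagree : ∀ w ∉ Ls, I''.wpref w = I'.wpref w)
    (hμ' : IsMenOptimal I' μ) (hν'' : IsStable I'' ν) (hμ : IsStable I μ) (hν : IsStable I ν)
    (hLs : ∀ l ∈ Ls, I.wWeak l (ν.μw l) (μ.μw l)) (w : W) :
    I.wWeak w (ν.μw w) (μ.μw w) := by
  obtain ⟨ρ, hρm, hρw⟩ := exists_menJoin hc hμ hν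
  have hρ : IsStable I' ρ := by
    refine isStable_of_forall_woman hc' fun w => ?_
    rw [SMInstance.mWeak_congr hm']
    rcases hρw w with hρμ | ⟨hw, hρν⟩
    · exact ⟨I', μ, hμ'.1, rfl, rfl, hρμ.symm, fun m => (hρm m).1⟩
    · have hwLs : w ∉ Ls := fun hwLs => (wWeak_iff_not_wStrictBetter hc).1 (hLs w hwLs) hw
      exact ⟨I'', ν, hν'', hm''.trans hm'.symm, hagree w hwLs, hρν.symm, fun m => (hρm m).2⟩
  have hmen (m : M) : ¬ mStrictBetter I m ν μ := by
    have hμρ := hμ'.2 ρ hρ m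
    rw [SMInstance.mWeak_congr hm'] at hμρ
    exact (mWeak_iff_not_mStrictBetter hc).1 (ListWeak.trans hμρ (hρm m).2)
  refine (wWeak_iff_not_wStrictBetter hc).2 fun ⟨p, hp, hpref⟩ => hmen p ?_
  exact mStrictBetter_of_wPref hc hν hp hpref

/-- `μ` is stable for `J`, so men-optimality of `ν` for `J` makes every man weakly better off
in `ν`; opposition of interests gives the converse. -/
theorem μw_eq_of_forall_wWeak {J : SMInstance M W} {L : Set W} (hc : I.IsComplete)
    (hP : PermManip I J L) (hν' : IsMenOptimal J ν) (hμ : IsStable I μ)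
    (hW : ∀ w, I.wWeak w (ν.μw w) (μ.μw w)) (hL : ∀ l ∈ L, ν.μw l = μ.μw l) (w : W) :
    ν.μw w = μ.μw w := by
  have hmen (m : M) : I.mWeak m (μ.μm m) (ν.μm m) := by
    refine (mWeak_iff_not_mStrictBetter hc).2 fun ⟨v, hv, hpref⟩ => ?_
    exact (wWeak_iff_not_wStrictBetter hc).1 (hW v) (wStrictBetter_of_mPref hc hμ hv hpref)
  have hμ' : IsStable J μ := by
    refine isStable_of_forall_woman (hP.isComplete hc) fun w => ?_
    rw [SMInstance.mWeak_congr hP.1.1]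
    by_cases hw : w ∈ L
    · exact ⟨J, ν, hν'.1, rfl, rfl, hL w hw, hmen⟩
    · exact ⟨I, μ, hμ, hP.1.1.symm, (hP.1.2 w hw).symm, rfl, fun _ => Or.inl rfl⟩
  refine ν.μw_eq_of_μm_eq (fun m => ListWeak.antisymm ?_ (hmen m)) w
  have := hν'.2 μ hμ' m
  rwa [SMInstance.mWeak_congr hP.1.1] at this

end Manipulation

end

/-- in the permutation-manipulation game under the feasibility
assumption, a matching is induced by some super-strong Nash equilibrium iff it is
Pareto-optimal among feasible matchings. -/
theorem ssne_iff_pareto {M W : Type*} [DecidableEq M] [DecidableEq W]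
    [Fintype M] [Fintype W] (I : SMInstance M W) (L : Set W)
    (hcomplete : ∀ m w, w ∈ I.mpref m ∧ m ∈ I.wpref w) (μ : Matching M W) :
    (∃ I', SuperStrongNE I L I' μ) ↔ ParetoOptimal I L μ := by
  constructor
  · rintro ⟨I', hP, hμ', hμ, hNE⟩
    refine ⟨⟨hμ, I', hP, hμ'⟩, ?_⟩
    rintro ⟨ν, ⟨hν, J, hPJ, hν'⟩, hW, w₀, m₀, hm₀, hpref⟩
    have hagree (w) (hw : w ∉ L) : J.wpref w = I'.wpref w :=
      (hPJ.1.2 w hw).trans (hP.1.2 w hw).symm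
    have hL (l) (hl : l ∈ L) : ν.μw l = μ.μw l := (hW l).resolve_right fun hl' =>
      hNE L subset_rfl J ν hPJ hagree hν' hν ⟨fun l _ => hW l, l, hl, hl'⟩
    rw [μw_eq_of_forall_wWeak hcomplete hPJ hν' hμ hW hL w₀] at hm₀
    exact ListPref.ne hpref hm₀
  · rintro ⟨⟨hμ, I', hP, hμ'⟩, hPareto⟩
    refine ⟨I', hP, hμ', hμ, ?_⟩
    rintro Ls - I'' ν hP'' hagree hν'' hν ⟨hLs, l, -, hl⟩
    exact hPareto ⟨ν, ⟨hν, I'', hP'', hν''⟩, wWeak_of_forall_mem_wWeak hcomplete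
      (hP.isComplete hcomplete) hP.1.1 hP''.1.1 hagree hμ' hν''.1 hμ hν hLs, l, hl⟩
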